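/- arXiv:2303.01414 — 4 statements merged into one kernel-verified Lean document; each statement's English description precedes it below -/
import Mathlib

section
/- Let ρ ∈ (0, 1/4] and let t : ℕ → ℝ≥0 be a processing-time function of a job on k machines such that the work w(k) = k·t(k) is non-decreasing in k. Then for any k with 1/ρ ≤ k, t(⌊(1-ρ)k⌋) ≤ (1+4ρ)·t(k). -/
/-!
Write `m = ⌊(1 - ρ) k⌋`. Monotone work gives `m t(m) ≤ k t(k)`, so it suffices that
`k ≤ (1 + 4ρ) m`. From `m > (1 - ρ) k - 1` this reduces to `1 + 4ρ ≤ ρk (3 - 4ρ)`, which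
holds because `ρk ≥ 1` and `ρ ≤ 1/4`.
-/

theorem apply_le_mul_of_natCast_mul_le {t : ℕ → ℝ} {m k : ℕ} {c : ℝ} (hm : 0 < m)
    (htk : 0 ≤ t k) (hwork : (m : ℝ) * t m ≤ k * t k) (hkm : (k : ℝ) ≤ c * m) :
    t m ≤ c * t k := by
  have hm' : (0 : ℝ) < m := by exact_mod_cast hm
  refine le_of_mul_le_mul_left ?_ hm'
  calc (m : ℝ) * t m ≤ k * t k := hwork
    _ ≤ c * m * t k := mul_le_mul_of_nonneg_right hkm htk
    _ = m * (c * t k) := by ring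

theorem le_mul_floor_one_sub_mul {ρ x : ℝ} (hρ0 : 0 < ρ) (hρ4 : ρ ≤ 1 / 4) (hx : 1 / ρ ≤ x) :
    x ≤ (1 + 4 * ρ) * ⌊(1 - ρ) * x⌋₊ := by
  have hρx : 1 ≤ ρ * x := by rwa [div_le_iff₀' hρ0] at hx
  have hfloor := Nat.sub_one_lt_floor ((1 - ρ) * x)
  nlinarith

theorem stmt_2 (ρ : ℝ) (hρ0 : 0 < ρ) (hρ4 : ρ ≤ 1/4)
    (t : ℕ → ℝ) (ht : ∀ k, 0 ≤ t k)
    (hmono : ∀ k k' : ℕ, k ≤ k' → (k : ℝ) * t k ≤ (k' : ℝ) * t k')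
    (k : ℕ) (hk : 1/ρ ≤ (k : ℝ)) :
    t (⌊(1 - ρ) * (k : ℝ)⌋.toNat) ≤ (1 + 4*ρ) * t k := by
  rw [Int.floor_toNat]
  have hk_le := le_mul_floor_one_sub_mul hρ0 hρ4 hk
  have hk_pos : (0 : ℝ) < k := (one_div_pos.mpr hρ0).trans_le hk
  have hfloor_le : ⌊(1 - ρ) * (k : ℝ)⌋₊ ≤ k :=
    Nat.floor_le_of_le (mul_le_of_le_one_left hk_pos.le (by linarith))
  have hfloor_pos : 0 < ⌊(1 - ρ) * (k : ℝ)⌋₊ := by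
    rw [Nat.pos_iff_ne_zero]
    intro h
    rw [h, Nat.cast_zero, mul_zero] at hk_le
    linarith
  exact apply_le_mul_of_natCast_mul_le hfloor_pos (ht k) (hmono _ _ hfloor_le) hk_le
end

section
/- For every natural number m ≥ 1 and every k ∈ {1,...,m}, with ρ ∈ (0,1/4] and b = 1/ρ, there exists s ∈ S_ρ with s ≤ k and k - s ≤ ρ·k, where S_ρ = {1,...,⌊b⌋} ∪ { ⌊(1+ρ)^i · b⌋ : 1 ≤ i ≤ ⌈log_{1+ρ}(m/b)⌉ } (interpreting the second set as empty if m < b). -/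
/-!
Below `b` every size is itself compressed. Above it, pick `i` with
`(1 + ρ)^i b < k + 1 ≤ (1 + ρ)^(i+1) b` and round `k` down to `⌊(1 + ρ)^i b⌋`. Since the next
grid point already reaches `k + 1`, the loss is below `k + 1 - (k + 1)/(1 + ρ)`, which is at
most `ρ k` as soon as `ρ k ≥ 1`, i.e. `k ≥ b`. Bracketing `k + 1` rather than `k` is what makes
this work for `k` close to `b`: bracketing `k` would only bound the loss by `ρ k / (1 + ρ) + 1`.
-/

open Real

theorem exists_nat_pow_lt_le {R : Type*} [Semiring R] [LinearOrder R] [IsStrictOrderedRing R]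
    [Archimedean R] [ExistsAddOfLE R] {x y : R} (hx : 1 < x) (hy : 1 < y) :
    ∃ n : ℕ, y ^ n < x ∧ x ≤ y ^ (n + 1) := by
  have h : ∃ n : ℕ, x ≤ y ^ n := (pow_unbounded_of_one_lt x hy).imp fun _ => le_of_lt
  have hpos : Nat.find h ≠ 0 := fun h0 => by
    have := Nat.find_spec h
    rw [h0, pow_zero] at this
    exact this.not_gt hx
  obtain ⟨n, hn⟩ : ∃ n, Nat.find h = n + 1 := ⟨_, (Nat.succ_pred_eq_of_ne_zero hpos).symm⟩
  exact ⟨n, lt_of_not_ge (Nat.find_min h (by omega)), hn ▸ Nat.find_spec h⟩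

theorem sub_floor_le_mul_of_lt_le {ρ A : ℝ} {k : ℕ} (hA : 0 ≤ A) (hlt : A < k + 1)
    (hle : k + 1 ≤ (1 + ρ) * A) (hρk : 1 ≤ ρ * k) :
    ⌊A⌋₊ ≤ k ∧ (k : ℝ) - ⌊A⌋₊ ≤ ρ * k := by
  refine ⟨Nat.lt_succ_iff.mp ((Nat.floor_lt hA).2 (by exact_mod_cast hlt)), ?_⟩
  have hρ : 0 ≤ ρ := by nlinarith [(Nat.cast_nonneg k : (0 : ℝ) ≤ k)]
  nlinarith [Nat.lt_floor_add_one A]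

theorem lt_ceil_logb_div_of_pow_mul_lt {c b y : ℝ} {j : ℕ} (hc : 1 < c) (hb : 0 < b)
    (h : c ^ j * b < y) : j < ⌈logb c (y / b)⌉₊ := by
  have hy : 0 < y / b := div_pos ((by positivity : 0 < c ^ j * b).trans h) hb
  refine Nat.lt_ceil.2 ((lt_logb_iff_rpow_lt hc hy).2 ?_)
  rwa [rpow_natCast, lt_div_iff₀ hb]

open Finset in
theorem stmt_5_general (ρ : ℝ) (hρ0 : 0 < ρ) (hρ4 : ρ ≤ 1/4) (b : ℝ) (hb : b = 1/ρ)
    (m : ℕ) (k : ℕ) (hk1 : 1 ≤ k) (hkm : k ≤ m) :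
    ∃ s ∈ Finset.Icc 1 ⌊b⌋₊ ∪
        (Finset.Icc 1 ⌈Real.logb (1 + ρ) ((m : ℝ) / b)⌉₊).image
          (fun i => ⌊(1 + ρ : ℝ)^i * b⌋₊),
      s ≤ k ∧ (k : ℝ) - (s : ℝ) ≤ ρ * k := by
  have hb0 : 0 < b := by rw [hb]; positivity
  have hρb : ρ * b = 1 := by rw [hb]; field_simp
  by_cases hsmall : k ≤ ⌊b⌋₊
  · exact ⟨k, mem_union_left _ (mem_Icc.2 ⟨hk1, hsmall⟩), le_rfl, by nlinarith⟩
  have hbk : b < k := (Nat.floor_lt hb0.le).1 (not_le.1 hsmall)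
  obtain ⟨i, hlo, hhi⟩ := exists_nat_pow_lt_le (x := (k + 1 : ℝ) / b) (y := 1 + ρ)
    (by rw [one_lt_div hb0]; linarith) (by linarith)
  rw [lt_div_iff₀ hb0] at hlo
  rw [div_le_iff₀ hb0, pow_succ, mul_comm _ (1 + ρ), mul_assoc] at hhi
  obtain ⟨hsk, hloss⟩ := sub_floor_le_mul_of_lt_le (by positivity) hlo hhi (by nlinarith)
  refine ⟨_, ?_, hsk, hloss⟩
  rcases i with _ | j
  · rw [pow_zero, one_mul]
    exact mem_union_left _ (mem_Icc.2 ⟨Nat.le_floor (by push_cast; nlinarith), le_rfl⟩)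
  · refine mem_union_right _ (mem_image.2 ⟨j + 1, mem_Icc.2 ⟨by omega, ?_⟩, rfl⟩)
    have hjb : 1 ≤ ρ * ((1 + ρ) ^ j * b) := by
      nlinarith [one_le_pow₀ (by linarith : (1 : ℝ) ≤ 1 + ρ) (n := j)]
    have hkm' : (k : ℝ) ≤ m := by exact_mod_cast hkm
    rw [pow_succ, mul_comm _ (1 + ρ), mul_assoc] at hlo
    exact Nat.succ_le_of_lt
      (lt_ceil_logb_div_of_pow_mul_lt (by linarith) hb0 (by nlinarith))

open Finset in
theorem stmt_5 (ρ : ℝ) (hρ0 : 0 < ρ) (hρ4 : ρ ≤ 1/4) (b : ℝ) (hb : b = 1/ρ)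
    (m : ℕ) (hm : 1 ≤ m) (k : ℕ) (hk1 : 1 ≤ k) (hkm : k ≤ m) :
    ∃ s ∈ Finset.Icc 1 ⌊b⌋₊ ∪
        (Finset.Icc 1 ⌈Real.logb (1 + ρ) ((m : ℝ) / b)⌉₊).image
          (fun i => ⌊(1 + ρ : ℝ)^i * b⌋₊),
      s ≤ k ∧ (k : ℝ) - (s : ℝ) ≤ ρ * k :=
  stmt_5_general ρ hρ0 hρ4 b hb m k hk1 hkm
end

section
/- Let t : ℕ → ℝ≥0 be non-increasing with monotone work (k ≤ k' implies k·t(k) ≤ k'·t(k')), let s > 0 and let ρ ∈ (0,1/4]. Let S ⊆ ℕ be a set of sizes with the property that for every k ≥ 1 there exists s' ∈ S with s' ≤ k and k - s' ≤ ρk. Define γ(s) = min{k : t(k) ≤ s} (assumed to exist) and γ'(s) = max{k ∈ S : k ≤ γ(s)}. If γ'(s) ≥ 1/ρ, then t(γ'(s)) ≥ s/(1+4ρ). -/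
/-! If `t γ'` were below `s / (1 + 4ρ)`, the compression bound would give
`t ⌊(1 - ρ) γ'⌋ < s`, so minimality of `γ` forces `γ ≤ ⌊(1 - ρ) γ'⌋ < γ' ≤ γ`. -/

lemma Int.toNat_floor_one_sub_mul_lt {ρ : ℝ} {k : ℕ} (hρ : 0 < ρ) (hk : 0 < k) :
    ⌊(1 - ρ) * (k : ℝ)⌋.toNat < k := by
  have hlt : (1 - ρ) * (k : ℝ) < (k : ℤ) := by
    push_cast
    nlinarith [(Nat.cast_pos (α := ℝ)).2 hk]
  have := Int.floor_lt.2 hlt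
  omega

theorem stmt_12_general (t : ℕ → ℝ)
    (s ρ : ℝ) (hρ0 : 0 < ρ)
    (hcomp : ∀ k : ℕ, 1/ρ ≤ (k : ℝ) → t (⌊(1 - ρ) * (k : ℝ)⌋.toNat) ≤ (1 + 4*ρ) * t k)
    (γ γ' : ℕ)
    (hγmin : ∀ k : ℕ, t k ≤ s → γ ≤ k)
    (hγ'le : γ' ≤ γ)
    (hwide : 1/ρ ≤ (γ' : ℝ)) :
    s / (1 + 4*ρ) ≤ t γ' := by
  by_contra! h
  have hsmall : (1 + 4*ρ) * t γ' < s := by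
    rw [lt_div_iff₀ (by positivity)] at h
    linarith
  have hγ_le : γ ≤ ⌊(1 - ρ) * (γ' : ℝ)⌋.toNat := hγmin _ ((hcomp γ' hwide).trans hsmall.le)
  have hγ'_pos : 0 < γ' := by exact_mod_cast (one_div_pos.2 hρ0).trans_le hwide
  have := Int.toNat_floor_one_sub_mul_lt hρ0 hγ'_pos
  omega

theorem stmt_12 (t : ℕ → ℝ) (ht : ∀ k, 0 ≤ t k)
    (hdec : ∀ k k' : ℕ, k ≤ k' → t k' ≤ t k)
    (hwork : ∀ k k' : ℕ, k ≤ k' → (k : ℝ) * t k ≤ (k' : ℝ) * t k')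
    (s ρ : ℝ) (hs : 0 < s) (hρ0 : 0 < ρ) (hρ4 : ρ ≤ 1/4)
    (S : Set ℕ)
    (hS : ∀ k : ℕ, 1 ≤ k → ∃ s' ∈ S, s' ≤ k ∧ (k : ℝ) - (s' : ℝ) ≤ ρ * k)
    (hcomp : ∀ k : ℕ, 1/ρ ≤ (k : ℝ) → t (⌊(1 - ρ) * (k : ℝ)⌋.toNat) ≤ (1 + 4*ρ) * t k)
    (γ γ' : ℕ)
    (hγle : t γ ≤ s) (hγmin : ∀ k : ℕ, t k ≤ s → γ ≤ k)
    (hγ'S : γ' ∈ S) (hγ'le : γ' ≤ γ) (hγ'max : ∀ k ∈ S, k ≤ γ → k ≤ γ')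
    (hwide : 1/ρ ≤ (γ' : ℝ)) :
    s / (1 + 4*ρ) ≤ t γ' :=
  stmt_12_general t s ρ hρ0 hcomp γ γ' hγmin hγ'le hwide
end

section
/- Let a = (a_i)_{0≤i<n} and b = (b_i)_{0≤i<n} be real sequences, and define their (max,+)-convolution c by c_i = max_{0≤j≤i} (a_j + b_{i-j}). If b is concave (b_{i+1} - b_i ≥ b_{i+2} - b_{i+1} for all valid i) and a is arbitrary, and if for index i the maximum is attained at j*, then for index i+1 the maximum over j of a_j + b_{i+1-j} is attained at some j ≥ j*. (Monotonicity of maximizers in (max,+)-convolution with a concave sequence.) -/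
/-! Moving from index `i` to `i + 1` adds to the candidate `a j + b (i - j)` the increment
`b (i - j + 1) - b (i - j)`. By concavity these increments decrease as `i - j` grows, so a smaller
`j` gains no more than `j*` does, and it was already no better than `j*` at index `i`. -/

theorem succ_sub_le_succ_sub_of_concave {α : Type*} [AddCommGroup α] [PartialOrder α]
    [IsOrderedAddMonoid α] {n : ℕ} {b : ℕ → α}
    (hconc : ∀ i : ℕ, i + 2 < n → b (i + 2) - b (i + 1) ≤ b (i + 1) - b i)
    {k m : ℕ} (hkm : k ≤ m) (hm : m + 1 < n) :
    b (m + 1) - b m ≤ b (k + 1) - b k := by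
  induction m, hkm using Nat.le_induction with
  | base => exact le_rfl
  | succ m _ ih => exact (hconc m hm).trans (ih (by omega))

theorem stmt_16 (n : ℕ) (a b : ℕ → ℝ)
    (hconc : ∀ i : ℕ, i + 2 < n → b (i + 2) - b (i + 1) ≤ b (i + 1) - b i)
    (i : ℕ) (hi : i + 1 < n)
    (jstar : ℕ) (hjstar : jstar ≤ i)
    (hmax : ∀ j : ℕ, j ≤ i → a j + b (i - j) ≤ a jstar + b (i - jstar)) :
    ∀ j : ℕ, j < jstar → a j + b (i + 1 - j) ≤ a jstar + b (i + 1 - jstar) := by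
  intro j hj
  have hshift : ∀ k ≤ i, i + 1 - k = i - k + 1 := fun k hk => by omega
  have hgain : b (i - j + 1) - b (i - j) ≤ b (i - jstar + 1) - b (i - jstar) :=
    succ_sub_le_succ_sub_of_concave hconc (by omega) (by omega)
  rw [hshift j (by omega), hshift jstar hjstar]
  linarith [hmax j (by omega)]
end
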